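/- Let π be a 132-avoiding permutation of length n and let 0 ≤ i ≤ n. The permutation of length n+1 obtained by inserting the value n+1 immediately after the first i entries of π avoids 132 if and only if i = 0 or the entry π_i is a right-to-left maximum of π. -/

import Mathlib

/-!
Since `n + 1` exceeds every entry, a 132-occurrence in the new permutation either avoids it, and
then lies in `π`, or uses it as the `3`; the latter happens exactly when some entry before the
insertion site is smaller than some entry after it. If the entry `b` just before the site is a
right-to-left maximum, such a pair `x < z` cannot involve `b`, and then `x, b, z` is a 132 in `π`.
Conversely, if `b` is smaller than a later entry `z`, then `b, n + 1, z` is a 132.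
-/

open List

attribute [local instance] Classical.propDecidable

/-- `l` is a permutation of length `n`, i.e. a list containing each of `1,…,n` exactly once. -/
def IsPermList (n : ℕ) (l : List ℕ) : Prop :=
  l.Perm (List.range' 1 n)

/-- Two sequences (with distinct entries) are order-isomorphic: same length and the same
pairwise order relations. -/
def OrderIsoList (a b : List ℕ) : Prop :=
  a.length = b.length ∧
    ∀ i j, i < j → j < a.length →
      (a.getD i 0 < a.getD j 0 ↔ b.getD i 0 < b.getD j 0)

/-- `l` contains the pattern `p`: some subsequence of `l` is order-isomorphic to `p`. -/
def ContainsPat (l p : List ℕ) : Prop :=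
  ∃ s, s.Sublist l ∧ OrderIsoList s p

/-- `l` avoids the pattern `p`. -/
def AvoidsPat (l p : List ℕ) : Prop := ¬ ContainsPat l p

/-- Relabel the entries of a list of distinct naturals order-isomorphically with `1,…,m`. -/
def standardize (l : List ℕ) : List ℕ :=
  l.map fun x => (l.filter fun y => y ≤ x).length

/-- Insert the new maximum value `l.length + 1` immediately after the first `i` entries. -/
def insertMax (l : List ℕ) (i : ℕ) : List ℕ :=
  l.take i ++ (l.length + 1) :: l.drop i

/-- The insertion step at position `i` for the pattern `p`: insert a new maximum after the
first `i` entries, keep the longest prefix avoiding `p` (i.e. remove the minimal suffix so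
that the result avoids `p`), then standardize. -/
noncomputable def insStep (p l : List ℕ) (i : ℕ) : List ℕ :=
  standardize ((insertMax l i).take
    (Nat.findGreatest (fun k => AvoidsPat ((insertMax l i).take k) p)
      (insertMax l i).length))

/-- The entry at (0-indexed) position `i` of `l` is a right-to-left maximum: it is larger
than every entry to its right. -/
def IsRLMax (l : List ℕ) (i : ℕ) : Prop :=
  ∀ j, i < j → j < l.length → l.getD j 0 < l.getD i 0

/-- The number of short values of `l`: entries that are not right-to-left maxima. -/
noncomputable def shortCount (l : List ℕ) : ℕ :=
  {i | i < l.length ∧ ¬ IsRLMax l i}.ncard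

lemma orderIsoList_132_iff (x y z : ℕ) :
    OrderIsoList [x, y, z] [1, 3, 2] ↔ x < z ∧ z ≤ y := by
  constructor
  · rintro ⟨-, hiso⟩
    have hxz := hiso 0 2 (by norm_num) (by norm_num)
    have hyz := hiso 1 2 (by norm_num) (by norm_num)
    simp only [getD_cons_zero, getD_cons_succ] at hxz hyz
    omega
  · rintro ⟨hxz, hzy⟩
    refine ⟨rfl, fun a b hab hb => ?_⟩
    simp only [length_cons, length_nil] at hb
    interval_cases b <;> interval_cases a <;> simp <;> omega

lemma containsPat_132_iff (l : List ℕ) :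
    ContainsPat l [1, 3, 2] ↔ ∃ x y z, [x, y, z] <+ l ∧ x < z ∧ z ≤ y := by
  constructor
  · rintro ⟨s, hs, hiso⟩
    match s, hiso.1 with
    | [x, y, z], _ => exact ⟨x, y, z, hs, (orderIsoList_132_iff x y z).1 hiso⟩
  · rintro ⟨x, y, z, hs, hxz⟩
    exact ⟨[x, y, z], hs, (orderIsoList_132_iff x y z).2 hxz⟩

lemma containsPat_132_append_cons_max_iff {A B : List ℕ} {m : ℕ} (hm : ∀ x ∈ A ++ B, x < m) :
    ContainsPat (A ++ m :: B) [1, 3, 2] ↔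
      ContainsPat (A ++ B) [1, 3, 2] ∨ ∃ x ∈ A, ∃ z ∈ B, x < z := by
  simp only [containsPat_132_iff]
  constructor
  · rintro ⟨x, y, z, hs, hxz, hzy⟩
    obtain ⟨s₁, s₂, hs, hs₁, hs₂⟩ := sublist_append_iff.1 hs
    rcases sublist_cons_iff.1 hs₂ with hs₂ | ⟨r, rfl, hr⟩
    · exact .inl ⟨x, y, z, hs ▸ hs₁.append hs₂, hxz, hzy⟩
    have hmA : ∀ a ∈ s₁, a < m := fun a ha => hm a (mem_append_left B (hs₁.subset ha))
    have hmB : ∀ a ∈ r, a < m := fun a ha => hm a (mem_append_right A (hr.subset ha))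
    match s₁, r, hs with
    | [], [_, _], hs =>
      simp only [nil_append, cons.injEq] at hs
      have := hmB y (by simp [hs])
      omega
    | [_], [_], hs =>
      simp only [cons_append, nil_append, cons.injEq] at hs
      obtain ⟨rfl, -, rfl, -⟩ := hs
      exact .inr ⟨x, hs₁.subset (mem_singleton_self x), z, hr.subset (mem_singleton_self z), hxz⟩
    | [_, _], [], hs =>
      simp only [cons_append, nil_append, cons.injEq] at hs
      have := hmA y (by simp [hs])
      omega
    | _ :: _ :: _ :: _, _, hs => simp at hs
  · rintro (⟨x, y, z, hs, hxz⟩ | ⟨x, hx, z, hz, hxz⟩)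
    · exact ⟨x, y, z, hs.trans ((sublist_cons_self m B).append_left A), hxz⟩
    · refine ⟨x, m, z, ?_, hxz, (hm z (mem_append_right A hz)).le⟩
      exact (singleton_sublist.2 hx).append ((singleton_sublist.2 hz).cons_cons m)

lemma isRLMax_iff_forall_mem_drop (l : List ℕ) (k : ℕ) :
    IsRLMax l k ↔ ∀ z ∈ l.drop (k + 1), z < l.getD k 0 := by
  simp only [IsRLMax, mem_drop_iff_getElem]
  constructor
  · rintro hl z ⟨j, hj, rfl⟩
    have hz := hl (j + (k + 1)) (by omega) hj
    rw [getD_eq_getElem _ _ hj] at hz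
    convert hz using 2
    omega
  · intro hl j hkj hj
    rw [getD_eq_getElem _ _ hj]
    exact hl _ ⟨j - (k + 1), by omega, by congr 1; omega⟩

lemma forall_le_iff_forall_lt_of_avoids_132 {A C : List ℕ} {b : ℕ}
    (ha : AvoidsPat (A ++ b :: C) [1, 3, 2]) (hb : b ∉ C) :
    (∀ x ∈ A ++ [b], ∀ z ∈ C, z ≤ x) ↔ ∀ z ∈ C, z < b := by
  constructor
  · intro h z hz
    exact (h b (mem_append_right A (mem_singleton_self b)) z hz).lt_of_ne
      (fun hzb => hb (hzb ▸ hz))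
  · intro h x hx z hz
    rcases mem_append.1 hx with hx | hx
    · by_contra! hxz
      refine ha ((containsPat_132_iff _).2 ⟨x, b, z, ?_, hxz, (h z hz).le⟩)
      exact (singleton_sublist.2 hx).append ((singleton_sublist.2 hz).cons_cons b)
    · exact (mem_singleton.1 hx) ▸ (h z hz).le

lemma forall_mem_take_drop_le_iff {l : List ℕ} (hnd : l.Nodup)
    (ha : AvoidsPat l [1, 3, 2]) (i : ℕ) :
    (∀ x ∈ l.take i, ∀ z ∈ l.drop i, z ≤ x) ↔ i = 0 ∨ IsRLMax l (i - 1) := by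
  rcases i with _ | k
  · simp
  rw [isRLMax_iff_forall_mem_drop]
  simp only [Nat.add_sub_cancel, Nat.add_one_ne_zero, false_or]
  rcases lt_or_ge k l.length with hk | hk
  · have hl : l.take k ++ l[k] :: l.drop (k + 1) = l := by
      rw [← drop_eq_getElem_cons hk, take_append_drop]
    rw [← take_append_getElem hk, getD_eq_getElem _ _ hk]
    rw [← hl] at ha hnd
    refine forall_le_iff_forall_lt_of_avoids_132 ha fun hmem => ?_
    exact (nodup_cons.1 (nodup_middle.1 hnd)).1 (mem_append_right _ hmem)
  · simp [drop_of_length_le (show l.length ≤ k + 1 by omega)]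

theorem insertMax_avoids_iff_general (n : ℕ) (π : List ℕ)
    (h : IsPermList n π) (ha : AvoidsPat π [1, 3, 2]) (i : ℕ) :
    AvoidsPat (insertMax π i) [1, 3, 2] ↔ i = 0 ∨ IsRLMax π (i - 1) := by
  have hlen : π.length = n := by simpa using h.length_eq
  have hmax : ∀ x ∈ π.take i ++ π.drop i, x < π.length + 1 := by
    intro x hx
    have := h.mem_iff.1 (take_append_drop i π ▸ hx)
    rw [mem_range'_1] at this
    omega
  have hnd : π.Nodup := h.nodup_iff.2 nodup_range'
  rw [← forall_mem_take_drop_le_iff hnd ha]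
  simp only [AvoidsPat, insertMax, containsPat_132_append_cons_max_iff hmax, take_append_drop,
    not_or, not_exists, not_and, not_lt]
  exact and_iff_right ha

/-- Inserting the new maximum after the first `i` entries of a 132-avoiding permutation
yields a 132-avoiding permutation iff `i = 0` or the `i`-th entry (the entry at 0-indexed
position `i - 1`) is a right-to-left maximum. -/
theorem insertMax_avoids_iff (n : ℕ) (π : List ℕ)
    (h : IsPermList n π) (ha : AvoidsPat π [1, 3, 2]) (i : ℕ) (hi : i ≤ n) :
    AvoidsPat (insertMax π i) [1, 3, 2] ↔ i = 0 ∨ IsRLMax π (i - 1) :=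
  insertMax_avoids_iff_general n π h ha i
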